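/- For every maintenance instance on a graph and every feasible LP solution (x, y, f), there exists a feasible preemptive schedule whose total connectivity time is at least the LP objective value Σ_{i=1}^k w_i·f_i. -/

import Mathlib

open MeasureTheory Set

/-- Feasibility of a preemptive maintenance schedule: each edge of the graph is assigned a
measurable set of maintenance times inside its window `[r e, d e]` of measure `p e`. -/
def PreemptFeasible {V : Type*} (G : SimpleGraph V) (r d p : Sym2 V → ℝ)
    (S : Sym2 V → Set ℝ) : Prop :=
  ∀ e ∈ G.edgeSet, MeasurableSet (S e) ∧ S e ⊆ Set.Icc (r e) (d e) ∧
    volume (S e) = ENNReal.ofReal (p e)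

/-- Feasibility of an LP solution `(f, y, x)` for the time grid `tp 0 < tp 1 < ⋯ < tp k`:
`f i` is the connectivity fraction of interval `Iᵢ = [tp (i-1), tp i]`, `y i e` the fractional
availability of edge `e` during `Iᵢ`, and `x i u v` the flow on arc `(u,v)` during `Iᵢ`. -/
def LPFeasible {V : Type*} [Fintype V] [DecidableEq V] (G : SimpleGraph V)
    (sp sm : V) (r d p : Sym2 V → ℝ) {k : ℕ} (tp : Fin (k + 1) → ℝ)
    (f : Fin k → ℝ) (y : Fin k → Sym2 V → ℝ) (x : Fin k → V → V → ℝ) : Prop :=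
  (∀ i, f i ∈ Set.Icc (0 : ℝ) 1) ∧
  (∀ i, ∀ e ∈ G.edgeSet, y i e ∈ Set.Icc (0 : ℝ) 1) ∧
  (∀ i u v, G.Adj u v → x i u v ∈ Set.Icc (0 : ℝ) 1) ∧
  (∀ i u v, ¬ G.Adj u v → x i u v = 0) ∧
  -- flow conservation: net outflow `f i` at `sp`, net inflow `f i` at `sm`, `0` elsewhere
  (∀ i v, (∑ u, x i v u) - (∑ u, x i u v) =
      if v = sp then f i else if v = sm then - f i else 0) ∧
  -- processing constraint: enough maintenance is done inside the window of each edge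
  (∀ e ∈ G.edgeSet,
      p e ≤ ∑ i : Fin k,
        if r e ≤ tp i.castSucc ∧ tp i.succ ≤ d e then
          (1 - y i e) * (tp i.succ - tp i.castSucc) else 0) ∧
  -- capacity constraint
  (∀ i u v, G.Adj u v → x i u v ≤ y i s(u, v))

/-- The LP objective `∑ i wᵢ · fᵢ`. -/
def LPObjective {k : ℕ} (tp : Fin (k + 1) → ℝ) (f : Fin k → ℝ) : ℝ :=
  ∑ i : Fin k, (tp i.succ - tp i.castSucc) * f i

/-!
Decompose the flow of each LP interval `Iᵢ` into `s⁺`–`s⁻` paths whose weights add up to `fᵢ`, and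
keep exactly the path `j` open during a sub-interval of `Iᵢ` of length `wᵢ gⱼ`. An edge `e` is
then needed during at most `wᵢ yᵢₑ` of `Iᵢ`, which leaves room for the `(1 - yᵢₑ) wᵢ` units of
maintenance the LP allows for `e` in `Iᵢ`; as Lebesgue measure has no atoms, a part of the free
time of exactly the required measure can be chosen. The network is connected throughout the path
sub-intervals, whose total length is `∑ wᵢ fᵢ`.
-/

open Function

theorem Monotone.pairwise_disjoint_on_Ico_castSucc_succ {α : Type*} [Preorder α] {n : ℕ}
    {u : Fin (n + 1) → α} (hu : Monotone u) :
    Pairwise (Disjoint on fun i : Fin n => Ico (u i.castSucc) (u i.succ)) :=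
  (pairwise_disjoint_on _).2 fun _ _ hij =>
    disjoint_iff_inf_le.mpr fun _ ⟨⟨_, h₁⟩, ⟨h₂, _⟩⟩ =>
      h₁.not_ge <| (hu <| Fin.succ_le_castSucc_iff.2 hij).trans h₂

theorem Fin.partialSum_last {M : Type*} [AddCommMonoid M] {n : ℕ} (f : Fin n → M) :
    Fin.partialSum f (Fin.last n) = ∑ i, f i := by
  simp [Fin.partialSum, List.sum_ofFn, List.take_of_length_le]

theorem Fin.monotone_partialSum {M : Type*} [AddCommMonoid M] [PartialOrder M]
    [IsOrderedAddMonoid M] {n : ℕ} {f : Fin n → M} (hf : ∀ i, 0 ≤ f i) :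
    Monotone (Fin.partialSum f) :=
  Fin.monotone_iff_le_succ.2 fun i => by
    rw [Fin.partialSum_succ]; exact le_add_of_nonneg_right (hf i)

theorem exists_pairwise_disjoint_Ico_volume (a : ℝ) {n : ℕ} (ℓ : Fin n → ℝ)
    (hℓ : ∀ j, 0 ≤ ℓ j) :
    ∃ J : Fin n → Set ℝ, Pairwise (Disjoint on J) ∧
      ∀ j, MeasurableSet (J j) ∧ J j ⊆ Ico a (a + ∑ i, ℓ i) ∧
        volume (J j) = ENNReal.ofReal (ℓ j) := by
  set u : Fin (n + 1) → ℝ := fun i => a + Fin.partialSum ℓ i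
  have hu : Monotone u := fun i i' h => by simpa [u] using Fin.monotone_partialSum hℓ h
  refine ⟨fun j => Ico (u j.castSucc) (u j.succ), hu.pairwise_disjoint_on_Ico_castSucc_succ,
    fun j => ⟨measurableSet_Ico, Ico_subset_Ico ?_ ?_, ?_⟩⟩
  · simpa [u] using hu (Fin.zero_le j.castSucc)
  · simpa [u, Fin.partialSum_last] using hu (Fin.le_last j.succ)
  · simp [u, Fin.partialSum_succ]

theorem exists_measurableSet_subset_volume_eq {s : Set ℝ} (hs : MeasurableSet s) {a b : ℝ}
    (hsub : s ⊆ Ico a b) {c : ℝ} (hc : 0 ≤ c) (hcs : ENNReal.ofReal c ≤ volume s) :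
    ∃ T ⊆ s, MeasurableSet T ∧ volume T = ENNReal.ofReal c := by
  have hfin : ∀ τ, volume (s ∩ Iio τ) ≠ ⊤ := fun τ =>
    ne_top_of_le_ne_top ENNReal.ofReal_ne_top ((measure_mono inter_subset_left).trans
      ((measure_mono (μ := volume) hsub).trans_eq Real.volume_Ico))
  set g : ℝ → ℝ := fun τ => (volume (s ∩ Iio τ)).toReal
  -- `g` is `1`-Lipschitz, so it takes every value between `g a = 0` and `g b = volume s`
  have hg : Continuous g := by
    refine (LipschitzWith.of_le_add fun τ τ' => ?_).continuous
    have hcover : s ∩ Iio τ ⊆ (s ∩ Iio τ') ∪ Ico τ' τ := fun z ⟨hz, hzτ⟩ =>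
      (lt_or_ge z τ').imp (fun h => ⟨hz, h⟩) fun h => ⟨h, hzτ⟩
    have := (measure_mono (μ := volume) hcover).trans (measure_union_le _ _)
    rw [Real.volume_Ico] at this
    refine (ENNReal.toReal_mono (ENNReal.add_ne_top.2 ⟨hfin τ', ENNReal.ofReal_ne_top⟩)
      this).trans ?_
    rw [ENNReal.toReal_add (hfin τ') ENNReal.ofReal_ne_top, ENNReal.toReal_ofReal', Real.dist_eq]
    gcongr
    exact max_le (le_abs_self _) (abs_nonneg _)
  have hga : g a = 0 := by
    have : s ∩ Iio a = ∅ := eq_empty_of_forall_notMem fun z hz => (hsub hz.1).1.not_gt hz.2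
    simp [g, this]
  have hgb : c ≤ g b := by
    have : s ∩ Iio b = s := inter_eq_left.2 fun z hz => (hsub hz).2
    simpa [g, this, hc] using ENNReal.toReal_mono (this ▸ hfin b) hcs
  obtain ⟨τ, hτ⟩ := intermediate_value_univ a b hg ⟨hga ▸ hc, hgb⟩
  refine ⟨s ∩ Iio τ, inter_subset_left, hs.inter measurableSet_Iio, ?_⟩
  rw [← ENNReal.ofReal_toReal (hfin τ)]
  exact congrArg ENNReal.ofReal hτ

theorem exists_subset_Ico_sdiff_volume_eq {B : Set ℝ} (hB : MeasurableSet B) {a b m ℓ : ℝ}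
    (hm : 0 ≤ m) (hℓ : 0 ≤ ℓ) (hBℓ : volume B ≤ ENNReal.ofReal ℓ) (h : m + ℓ ≤ b - a) :
    ∃ T ⊆ Ico a b \ B, MeasurableSet T ∧ volume T = ENNReal.ofReal m :=
  exists_measurableSet_subset_volume_eq (measurableSet_Ico.diff hB) sdiff_subset hm <| calc
    ENNReal.ofReal m ≤ ENNReal.ofReal (b - a - ℓ) := ENNReal.ofReal_le_ofReal (by linarith)
    _ = ENNReal.ofReal (b - a) - ENNReal.ofReal ℓ := ENNReal.ofReal_sub _ hℓ
    _ ≤ volume (Ico a b) - volume B := by rw [Real.volume_Ico]; gcongr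
    _ ≤ volume (Ico a b \ B) := le_measure_sdiff

theorem measure_biUnion_le_ofReal_sum {α ι : Type*} [MeasurableSpace α] {μ : Measure α}
    [Fintype ι] {J : ι → Set α} {ℓ : ι → ℝ} (hJ : ∀ j, μ (J j) = ENNReal.ofReal (ℓ j))
    (hℓ : ∀ j, 0 ≤ ℓ j) (P : ι → Prop) [DecidablePred P] :
    μ (⋃ j, ⋃ (_ : P j), J j) ≤ ENNReal.ofReal (∑ j, if P j then ℓ j else 0) :=
  calc μ (⋃ j, ⋃ (_ : P j), J j) ≤ ∑ j, μ (⋃ (_ : P j), J j) := measure_iUnion_fintype_le _ _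
    _ ≤ ∑ j, ENNReal.ofReal (if P j then ℓ j else 0) := by
        gcongr with j
        split_ifs with h <;> simp [h, hJ j]
    _ = _ := (ENNReal.ofReal_sum_of_nonneg fun j _ => by
        split_ifs; exacts [hℓ j, le_rfl]).symm

theorem measure_inter_eq_of_subset_or {α : Type*} [MeasurableSpace α] {μ : Measure α}
    {T W : Set α} {m : ℝ} (hT : μ T = ENNReal.ofReal m) (h : m = 0 ∨ T ⊆ W) :
    μ (T ∩ W) = ENNReal.ofReal m := by
  rcases h with rfl | h
  · rw [ENNReal.ofReal_zero] at hT ⊢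
    exact measure_mono_null inter_subset_left hT
  · rwa [inter_eq_left.2 h]

section Allocation

variable {ι : Type*} [Fintype ι] {c : ι → ℝ} {q : ℝ}

theorem mul_div_sum_le (hc : ∀ i, 0 ≤ c i) (hq : q ≤ ∑ i, c i) (i : ι) :
    c i * (q / ∑ j, c j) ≤ c i :=
  mul_le_of_le_one_right (hc i) (div_le_one_of_le₀ hq (Finset.sum_nonneg fun j _ => hc j))

theorem sum_mul_div_sum (hq₀ : 0 ≤ q) (hc : ∀ i, 0 ≤ c i) (hq : q ≤ ∑ i, c i) :
    ∑ i, c i * (q / ∑ j, c j) = q := by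
  rcases (Finset.sum_nonneg fun j _ => hc j).eq_or_lt' with h | h
  · rw [h, div_zero]; simp [le_antisymm (h ▸ hq) hq₀]
  · rw [← Finset.sum_mul, mul_div_cancel₀ _ h.ne']

end Allocation

namespace SimpleGraph

section Walks

variable {V : Type*} {G : SimpleGraph V}

theorem exists_walk_of_reflTransGen {r : V → V → Prop} (hr : ∀ a b, r a b → G.Adj a b)
    {u v : V} (h : Relation.ReflTransGen r u v) :
    ∃ p : G.Walk u v, ∀ d ∈ p.darts, r d.fst d.snd := by
  induction h with
  | refl => exact ⟨Walk.nil, by simp⟩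
  | @tail b c _ hbc ih =>
    obtain ⟨p, hp⟩ := ih
    refine ⟨p.concat (hr b c hbc), fun d hd => ?_⟩
    rw [Walk.darts_concat, List.concat_eq_append, List.mem_append, List.mem_singleton] at hd
    rcases hd with hd | rfl
    exacts [hp d hd, hbc]

variable [DecidableEq V]

def Walk.arcCount {u v : V} (p : G.Walk u v) (a b : V) : ℝ :=
  (p.darts.map Dart.toProd).count (a, b)

namespace Walk

variable {u v : V}

theorem arcCount_nonneg (p : G.Walk u v) (a b : V) : 0 ≤ p.arcCount a b := Nat.cast_nonneg _

theorem arcCount_ne_zero_iff {p : G.Walk u v} {a b : V} :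
    p.arcCount a b ≠ 0 ↔ (a, b) ∈ p.darts.map Dart.toProd := by
  rw [arcCount, Nat.cast_ne_zero, ← Nat.pos_iff_ne_zero, List.count_pos_iff]

theorem one_le_arcCount {p : G.Walk u v} {d : G.Dart} (hd : d ∈ p.darts) :
    1 ≤ p.arcCount d.fst d.snd := by
  simpa [arcCount] using List.count_pos_iff.2 (List.mem_map_of_mem (f := Dart.toProd) hd)

theorem of_arcCount_ne_zero {p : G.Walk u v} {P : V → V → Prop}
    (hP : ∀ d ∈ p.darts, P d.fst d.snd) {a b : V} (h : p.arcCount a b ≠ 0) : P a b := by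
  obtain ⟨d, hd, hdab⟩ := List.mem_map.1 (arcCount_ne_zero_iff.1 h)
  obtain ⟨rfl, rfl⟩ := Prod.ext_iff.1 hdab
  exact hP d hd

theorem adj_of_arcCount_ne_zero {p : G.Walk u v} {a b : V} (h : p.arcCount a b ≠ 0) :
    G.Adj a b :=
  of_arcCount_ne_zero (fun d _ => d.adj) h

theorem IsPath.arcCount_le_one {p : G.Walk u v} (hp : p.IsPath) (a b : V) :
    p.arcCount a b ≤ 1 := by
  have := List.nodup_iff_count_le_one.1
    ((darts_nodup_of_support_nodup hp.support_nodup).map Dart.toProd_injective) (a, b)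
  simp only [arcCount]
  exact_mod_cast this

theorem one_le_arcCount_add_of_mem_edges {p : G.Walk u v} {a b : V} (h : s(a, b) ∈ p.edges) :
    1 ≤ p.arcCount a b + p.arcCount b a := by
  obtain ⟨d, hd, hde⟩ := List.mem_map.1 h
  rcases Sym2.eq_iff.1 hde with ⟨rfl, rfl⟩ | ⟨rfl, rfl⟩
  · linarith [one_le_arcCount hd, p.arcCount_nonneg d.snd d.fst]
  · linarith [one_le_arcCount hd, p.arcCount_nonneg d.snd d.fst]

theorem IsPath.mul_arcCount_le {p : G.Walk u v} (hp : p.IsPath) {c : ℝ} (hc : 0 ≤ c)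
    {x : V → V → ℝ} (hcx : ∀ d ∈ p.darts, c ≤ x d.fst d.snd) (hx : ∀ a b, 0 ≤ x a b) (a b : V) :
    c * p.arcCount a b ≤ x a b := by
  by_cases h : p.arcCount a b = 0
  · simpa [h] using hx a b
  · calc c * p.arcCount a b ≤ c * 1 := mul_le_mul_of_nonneg_left (hp.arcCount_le_one a b) hc
      _ ≤ x a b := by simpa using of_arcCount_ne_zero (P := fun a b => c ≤ x a b) hcx h

theorem arcCount_cons {w : V} (h : G.Adj u w) (q : G.Walk w v) (a b : V) :
    (cons h q).arcCount a b = (if (u, w) = (a, b) then 1 else 0) + q.arcCount a b := by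
  simp only [arcCount, darts_cons, List.map_cons, List.count_cons, beq_iff_eq]
  push_cast
  exact add_comm _ _

end Walk

end Walks

section Flows

variable {V : Type*} [Fintype V]

def netFlow (x : V → V → ℝ) (v : V) : ℝ := ∑ u, x v u - ∑ u, x u v

theorem sum_netFlow (x : V → V → ℝ) : ∑ v, netFlow x v = 0 := by
  simp only [netFlow, Finset.sum_sub_distrib]
  rw [Finset.sum_comm, sub_self]

theorem netFlow_add (x x' : V → V → ℝ) (v : V) :
    netFlow (x + x') v = netFlow x v + netFlow x' v := by
  simp only [netFlow, Pi.add_apply, Finset.sum_add_distrib]; ring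

theorem netFlow_sub (x x' : V → V → ℝ) (v : V) :
    netFlow (x - x') v = netFlow x v - netFlow x' v := by
  simp only [netFlow, Pi.sub_apply, Finset.sum_sub_distrib]; ring

theorem netFlow_smul (c : ℝ) (x : V → V → ℝ) (v : V) :
    netFlow (c • x) v = c * netFlow x v := by
  simp only [netFlow, Pi.smul_apply, smul_eq_mul, ← Finset.mul_sum]; ring

variable [DecidableEq V]

theorem netFlow_arc (a b v : V) :
    netFlow (fun u w => if (a, b) = (u, w) then (1 : ℝ) else 0) v =
      (if v = a then 1 else 0) - (if v = b then 1 else 0) := by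
  simp only [netFlow, Prod.mk.injEq, ite_and, Finset.sum_ite_irrel, Finset.sum_ite_eq,
    Finset.mem_univ, if_true, Finset.sum_const_zero, @eq_comm _ a v, @eq_comm _ b v]

theorem Walk.netFlow_arcCount {G : SimpleGraph V} {u v : V} (p : G.Walk u v) (w : V) :
    netFlow p.arcCount w = (if w = u then 1 else 0) - (if w = v then 1 else 0) := by
  induction p with
  | nil => simp [netFlow, arcCount]
  | cons h q ih =>
    rw [show (cons h q).arcCount = _ + q.arcCount from funext₂ (arcCount_cons h q),
      netFlow_add, netFlow_arc, ih]
    ring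

theorem Walk.card_pos_sub_smul_arcCount_lt {G : SimpleGraph V} {u v : V} {p : G.Walk u v}
    {x : V → V → ℝ} {δ : ℝ} (hδ : 0 ≤ δ) {d₀ : G.Dart} (hd₀ : d₀ ∈ p.darts)
    (hx₀ : 0 < x d₀.fst d₀.snd) (hx₀δ : x d₀.fst d₀.snd ≤ δ) :
    (Finset.univ.filter fun q : V × V => 0 < (x - δ • p.arcCount) q.1 q.2).card <
      (Finset.univ.filter fun q : V × V => 0 < x q.1 q.2).card := by
  refine Finset.card_lt_card ((Finset.ssubset_iff_of_subset fun q hq => ?_).2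
    ⟨d₀.toProd, by simpa using hx₀, ?_⟩)
  · simp only [Finset.mem_filter, Finset.mem_univ, true_and, Pi.sub_apply,
      Pi.smul_apply, smul_eq_mul] at hq ⊢
    nlinarith [p.arcCount_nonneg q.1 q.2]
  · simp only [Finset.mem_filter, Finset.mem_univ, true_and, Pi.sub_apply,
      Pi.smul_apply, smul_eq_mul, not_lt]
    nlinarith [one_le_arcCount hd₀]

structure IsFlow (G : SimpleGraph V) (s t : V) (f : ℝ) (x : V → V → ℝ) : Prop where
  nonneg : ∀ u v, 0 ≤ x u v
  eq_zero_of_not_adj : ∀ u v, ¬ G.Adj u v → x u v = 0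
  netFlow_eq : ∀ v, netFlow x v = if v = s then f else if v = t then -f else 0

namespace IsFlow

variable {G : SimpleGraph V} {s t : V} {f : ℝ} {x : V → V → ℝ}

theorem ne (hx : G.IsFlow s t f x) (hf : 0 < f) : s ≠ t := by
  rintro rfl
  have := sum_netFlow x
  rw [Finset.sum_eq_single s (fun v _ hv => by simp [hx.netFlow_eq, hv]) (by simp),
    hx.netFlow_eq, if_pos rfl] at this
  exact hf.ne' this

/-- Cut argument: the set `R` of vertices reachable from `s` along positive arcs has no positive
arc leaving it, so its total net outflow is `≤ 0`; if `t ∉ R` that total would be `f > 0`. -/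
theorem reflTransGen_pos (hx : G.IsFlow s t f x) (hf : 0 < f) :
    Relation.ReflTransGen (fun u v => 0 < x u v) s t := by
  classical
  by_contra ht
  set R := Finset.univ.filter (Relation.ReflTransGen (fun u v => 0 < x u v) s)
  have hs : s ∈ R := by simp [R, Relation.ReflTransGen.refl]
  have htR : t ∉ R := by simpa [R] using ht
  have hout : ∀ v ∈ R, ∀ u ∉ R, x v u = 0 := fun v hv u hu =>
    (hx.nonneg v u).antisymm' <| not_lt.1 fun hvu =>
      hu (by simpa [R] using ((Finset.mem_filter.1 hv).2.tail hvu))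
  have hsum : ∑ v ∈ R, netFlow x v = f := by
    rw [Finset.sum_eq_single_of_mem s hs fun v hv hvs => ?_]
    · simp [hx.netFlow_eq]
    · rw [hx.netFlow_eq, if_neg hvs, if_neg (ne_of_mem_of_not_mem hv htR)]
  have hle : ∑ v ∈ R, netFlow x v ≤ ∑ v ∈ R, (∑ u ∈ R, x v u - ∑ u ∈ R, x u v) := by
    refine Finset.sum_le_sum fun v hv => sub_le_sub (le_of_eq ?_) ?_
    · exact (Finset.sum_subset (Finset.subset_univ R) fun u _ hu => hout v hv u hu).symm
    · exact Finset.sum_le_sum_of_subset_of_nonneg (Finset.subset_univ R)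
        fun u _ _ => hx.nonneg u v
  rw [Finset.sum_sub_distrib, Finset.sum_comm, sub_self, hsum] at hle
  exact hf.not_ge hle

theorem exists_isPath_pos (hx : G.IsFlow s t f x) (hf : 0 < f) :
    ∃ p : G.Walk s t, p.IsPath ∧ ∀ d ∈ p.darts, 0 < x d.fst d.snd := by
  obtain ⟨p, hp⟩ := exists_walk_of_reflTransGen
    (fun u v h => by_contra fun hG => h.ne' (hx.eq_zero_of_not_adj u v hG)) (hx.reflTransGen_pos hf)
  exact ⟨p.bypass, p.bypass_isPath, fun d hd => hp d (p.darts_bypass_subset_darts hd)⟩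

theorem sub_smul_arcCount (hx : G.IsFlow s t f x) (hst : s ≠ t) {p : G.Walk s t}
    (hp : p.IsPath) {δ : ℝ} (hδ : 0 ≤ δ) (hδx : ∀ d ∈ p.darts, δ ≤ x d.fst d.snd) :
    G.IsFlow s t (f - δ) (x - δ • p.arcCount) where
  nonneg a b := sub_nonneg.2 (hp.mul_arcCount_le hδ hδx hx.nonneg a b)
  eq_zero_of_not_adj a b hab := by
    have : p.arcCount a b = 0 := by_contra fun h => hab (Walk.adj_of_arcCount_ne_zero h)
    simp [hx.eq_zero_of_not_adj a b hab, this]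
  netFlow_eq v := by
    rw [netFlow_sub, netFlow_smul, p.netFlow_arcCount, hx.netFlow_eq]
    rcases eq_or_ne v s with rfl | hvs
    · simp [hst]
    rcases eq_or_ne v t with rfl | hvt
    · simp [hvs]; ring
    · simp [hvs, hvt]

theorem exists_walk_decomposition (hx : G.IsFlow s t f x) (hf : 0 ≤ f) :
    ∃ (n : ℕ) (P : Fin n → G.Walk s t) (g : Fin n → ℝ), (∀ j, 0 ≤ g j) ∧ ∑ j, g j = f ∧
      ∀ a b, ∑ j, g j * (P j).arcCount a b ≤ x a b := by
  classical
  induction hN : (Finset.univ.filter fun q : V × V => 0 < x q.1 q.2).card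
    using Nat.strong_induction_on generalizing f x with
  | _ N ih =>
  rcases hf.eq_or_lt with rfl | hf
  · exact ⟨0, Fin.elim0, Fin.elim0, fun j => j.elim0, by simp,
      fun a b => by simpa using hx.nonneg a b⟩
  obtain ⟨p, hp, hpos⟩ := hx.exists_isPath_pos hf
  have hne : p.darts.toFinset.Nonempty := List.toFinset_nonempty_iff _ |>.2 fun h =>
    hx.ne hf (Walk.eq_of_length_eq_zero (by rw [← Walk.length_darts, h, List.length_nil]))
  obtain ⟨d₀, hd₀, hmin⟩ := p.darts.toFinset.exists_min_image (fun d => x d.fst d.snd) hne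
  simp only [List.mem_toFinset] at hd₀ hmin
  -- `δ` is the bottleneck of `p`: subtracting it along `p` empties `d₀`, shrinking the support
  set δ := x d₀.fst d₀.snd
  by_cases hfδ : f ≤ δ
  · refine ⟨1, fun _ => p, fun _ => f, fun _ => hf.le, by simp, fun a b => ?_⟩
    simpa using hp.mul_arcCount_le hf.le (fun d hd => hfδ.trans (hmin d hd)) hx.nonneg a b
  rw [not_le] at hfδ
  have hδ : 0 < δ := hpos d₀ hd₀
  have hx' := hx.sub_smul_arcCount (hx.ne hf) hp hδ.le hmin
  have hlt := hN ▸ Walk.card_pos_sub_smul_arcCount_lt hδ.le hd₀ hδ le_rfl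
  obtain ⟨n, P, g, hg, hgf, hgx⟩ := ih _ hlt hx' (by linarith) rfl
  refine ⟨n + 1, Fin.cons p P, Fin.cons δ g, Fin.cases hδ.le hg,
    by simp [Fin.sum_univ_succ, hgf], fun a b => ?_⟩
  have := hgx a b
  simp only [Fin.sum_univ_succ, Fin.cons_zero, Fin.cons_succ, Pi.sub_apply, Pi.smul_apply,
    smul_eq_mul] at this ⊢
  linarith

theorem max_sub_swap (hx : G.IsFlow s t f x) :
    G.IsFlow s t f fun u v => max (x u v - x v u) 0 where
  nonneg _ _ := le_max_right _ _
  eq_zero_of_not_adj u v h := by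
    simp [hx.eq_zero_of_not_adj u v h, hx.eq_zero_of_not_adj v u fun h' => h h'.symm]
  netFlow_eq v := by
    rw [← hx.netFlow_eq v, netFlow, netFlow, ← Finset.sum_sub_distrib, ← Finset.sum_sub_distrib]
    refine Finset.sum_congr rfl fun u _ => ?_
    rw [← neg_sub (x v u)]
    exact max_zero_sub_eq_self _

/-- Decomposing the flow with opposite arcs cancelled bounds the load of the edge `{u, v}` by
`|x u v - x v u| ≤ max (x u v) (x v u)`. -/
theorem exists_walk_decomposition_of_le (hx : G.IsFlow s t f x) (hf : 0 ≤ f)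
    {y : Sym2 V → ℝ} (hxy : ∀ u v, G.Adj u v → x u v ≤ y s(u, v)) :
    ∃ (n : ℕ) (P : Fin n → G.Walk s t) (g : Fin n → ℝ), (∀ j, 0 ≤ g j) ∧ ∑ j, g j = f ∧
      ∀ e ∈ G.edgeSet, ∑ j, (if e ∈ (P j).edges then g j else 0) ≤ y e := by
  set x' : V → V → ℝ := fun u v => max (x u v - x v u) 0
  obtain ⟨n, P, g, hg, hgf, hgx⟩ := hx.max_sub_swap.exists_walk_decomposition hf
  refine ⟨n, P, g, hg, hgf, fun e he => ?_⟩
  induction e using Sym2.inductionOn with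
  | hf a b =>
  have hab : G.Adj a b := he
  calc ∑ j, (if s(a, b) ∈ (P j).edges then g j else 0)
      ≤ ∑ j, g j * (P j).arcCount a b + ∑ j, g j * (P j).arcCount b a := by
        rw [← Finset.sum_add_distrib]
        refine Finset.sum_le_sum fun j _ => ?_
        split_ifs with h
        · nlinarith [hg j, Walk.one_le_arcCount_add_of_mem_edges h]
        · exact add_nonneg (mul_nonneg (hg j) ((P j).arcCount_nonneg a b))
            (mul_nonneg (hg j) ((P j).arcCount_nonneg b a))
    _ ≤ x' a b + x' b a := add_le_add (hgx a b) (hgx b a)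
    _ ≤ y s(a, b) := by
        have h₁ := hxy a b hab
        have h₂ := hxy b a hab.symm
        rw [Sym2.eq_swap] at h₂
        simp only [x']
        rcases le_total (x a b) (x b a) with h | h
        · rw [max_eq_right (sub_nonpos.2 h), max_eq_left (sub_nonneg.2 h)]
          linarith [hx.nonneg a b]
        · rw [max_eq_left (sub_nonneg.2 h), max_eq_right (sub_nonpos.2 h)]
          linarith [hx.nonneg b a]

end IsFlow

end Flows

end SimpleGraph

theorem exists_interval_schedule {E : Type*} {n : ℕ} (A : Fin n → E → Prop)
    [∀ j, DecidablePred (A j)] {g : Fin n → ℝ}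
    (hg : ∀ j, 0 ≤ g j) (hg1 : ∑ j, g j ≤ 1) {a b : ℝ} (hab : a ≤ b) (m : E → ℝ) :
    ∃ (T : E → Set ℝ) (U : Set ℝ),
      (∀ e, MeasurableSet (T e) ∧ T e ⊆ Ico a b ∧
        (0 ≤ m e → m e + (b - a) * ∑ j, (if A j e then g j else 0) ≤ b - a →
          volume (T e) = ENNReal.ofReal (m e))) ∧
      MeasurableSet U ∧ U ⊆ Ico a b ∧ volume U = ENNReal.ofReal ((b - a) * ∑ j, g j) ∧
      ∀ t ∈ U, ∃ j, ∀ e, A j e → t ∉ T e := by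
  have hw : 0 ≤ b - a := sub_nonneg.2 hab
  obtain ⟨J, hJd, hJ⟩ := exists_pairwise_disjoint_Ico_volume a (fun j => (b - a) * g j)
    fun j => mul_nonneg hw (hg j)
  have hJab : ∀ j, J j ⊆ Ico a b := fun j => (hJ j).2.1.trans <| Ico_subset_Ico_right <| by
    rw [← Finset.mul_sum]; nlinarith
  -- `J j` is reserved for `j`, so `T e` has to avoid `B e`
  set B : E → Set ℝ := fun e => ⋃ j, ⋃ (_ : A j e), J j
  have hBvol : ∀ e, volume (B e) ≤
      ENNReal.ofReal ((b - a) * ∑ j, if A j e then g j else 0) := fun e => by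
    simpa only [Finset.mul_sum, mul_ite, mul_zero] using
      measure_biUnion_le_ofReal_sum (fun j => (hJ j).2.2) (fun j => mul_nonneg hw (hg j)) (A · e)
  have hT : ∀ e, ∃ T ⊆ Ico a b \ B e, MeasurableSet T ∧
      (0 ≤ m e → m e + (b - a) * ∑ j, (if A j e then g j else 0) ≤ b - a →
        volume T = ENNReal.ofReal (m e)) := by
    intro e
    by_cases h : 0 ≤ m e ∧ m e + (b - a) * ∑ j, (if A j e then g j else 0) ≤ b - a
    · obtain ⟨T, hT, hTm, hTv⟩ := exists_subset_Ico_sdiff_volume_eq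
        (MeasurableSet.iUnion fun j => MeasurableSet.iUnion fun _ => (hJ j).1) h.1
        (mul_nonneg hw (Finset.sum_nonneg fun j _ => by split_ifs; exacts [hg j, le_rfl]))
        (hBvol e) h.2
      exact ⟨T, hT, hTm, fun _ _ => hTv⟩
    · exact ⟨∅, empty_subset _, MeasurableSet.empty, fun h₁ h₂ => absurd ⟨h₁, h₂⟩ h⟩
  choose T hTB hTm hTv using hT
  refine ⟨T, ⋃ j, J j, fun e => ⟨hTm e, (hTB e).trans sdiff_subset, hTv e⟩,
    MeasurableSet.iUnion fun j => (hJ j).1, iUnion_subset hJab, ?_, ?_⟩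
  · rw [measure_iUnion hJd fun j => (hJ j).1, tsum_fintype, Finset.mul_sum,
      ENNReal.ofReal_sum_of_nonneg fun j _ => mul_nonneg hw (hg j)]
    exact Finset.sum_congr rfl fun j _ => (hJ j).2.2
  · rintro t ⟨_, ⟨j, rfl⟩, ht⟩
    exact ⟨j, fun e he hte => (hTB e hte).2 (mem_iUnion₂.2 ⟨j, he, ht⟩)⟩

section Schedules

variable {V : Type*} {G : SimpleGraph V} {r d p : Sym2 V → ℝ}

theorem nonneg_of_range_eq {k : ℕ} {tp : Fin (k + 1) → ℝ}
    (hrange : Set.range tp = insert 0 {τ : ℝ | ∃ e ∈ G.edgeSet, r e = τ ∨ d e = τ})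
    (hr : ∀ e ∈ G.edgeSet, 0 ≤ r e) (hd : ∀ e ∈ G.edgeSet, 0 ≤ d e) (i : Fin (k + 1)) :
    0 ≤ tp i := by
  have hi : tp i ∈ insert (0 : ℝ) {τ : ℝ | ∃ e ∈ G.edgeSet, r e = τ ∨ d e = τ} :=
    hrange ▸ mem_range_self i
  obtain h | ⟨e, he, h | h⟩ := hi
  exacts [h.ge, h ▸ hr e he, h ▸ hd e he]

theorem preemptFeasible_iUnion {k : ℕ} {I : Fin k → Set ℝ} (hI : Pairwise (Disjoint on I))
    {T : Fin k → Sym2 V → Set ℝ} (hTI : ∀ i e, T i e ⊆ I i) (hT : ∀ i e, MeasurableSet (T i e))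
    {m : Sym2 V → Fin k → ℝ} (hm : ∀ e ∈ G.edgeSet, ∀ i, 0 ≤ m e i)
    (hmp : ∀ e ∈ G.edgeSet, ∑ i, m e i = p e)
    (hTm : ∀ e ∈ G.edgeSet, ∀ i, volume (T i e ∩ Icc (r e) (d e)) = ENNReal.ofReal (m e i)) :
    PreemptFeasible G r d p fun e => ⋃ i, T i e ∩ Icc (r e) (d e) := by
  intro e he
  refine ⟨MeasurableSet.iUnion fun i => (hT i e).inter measurableSet_Icc,
    iUnion_subset fun i => inter_subset_right, ?_⟩
  rw [measure_iUnion (fun i i' hii' => (hI hii').mono (inter_subset_left.trans (hTI i e))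
      (inter_subset_left.trans (hTI i' e))) fun i => (hT i e).inter measurableSet_Icc,
    tsum_fintype, ← hmp e he, ENNReal.ofReal_sum_of_nonneg fun i _ => hm e he i]
  exact Finset.sum_congr rfl fun i _ => hTm e he i

theorem subset_reachable_deleteEdges {k : ℕ} {I : Fin k → Set ℝ} (hI : Pairwise (Disjoint on I))
    {T : Fin k → Sym2 V → Set ℝ} (hTI : ∀ i e, T i e ⊆ I i) {S : Sym2 V → Set ℝ}
    (hS : ∀ e, S e ⊆ ⋃ i, T i e) {s t : V} {U : Fin k → Set ℝ} (hUI : ∀ i, U i ⊆ I i)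
    (hU : ∀ i, ∀ τ ∈ U i, ∃ q : G.Walk s t, ∀ e ∈ q.edges, τ ∉ T i e) :
    ⋃ i, U i ⊆ {τ | (G.deleteEdges {e | τ ∈ S e}).Reachable s t} := by
  rintro τ ⟨_, ⟨i, rfl⟩, hτ⟩
  obtain ⟨q, hq⟩ := hU i τ hτ
  refine ⟨q.toDeleteEdges _ fun e he hτe => ?_⟩
  obtain ⟨i', hi'⟩ := mem_iUnion.1 (hS e hτe)
  obtain rfl : i' = i := by_contra fun h => (hI h).notMem_of_mem_left (hTI i' e hi') (hUI i hτ)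
  exact hq e he hi'

end Schedules

namespace LPFeasible

variable {V : Type*} [Fintype V] [DecidableEq V] {G : SimpleGraph V} {sp sm : V}
  {r d p : Sym2 V → ℝ} {k : ℕ} {tp : Fin (k + 1) → ℝ} {f : Fin k → ℝ} {y : Fin k → Sym2 V → ℝ}
  {x : Fin k → V → V → ℝ}

theorem isFlow (hLP : LPFeasible G sp sm r d p tp f y x) (i : Fin k) :
    G.IsFlow sp sm (f i) (x i) := by
  obtain ⟨-, -, hx, hxG, hcons, -, -⟩ := hLP
  refine ⟨fun u v => ?_, hxG i, hcons i⟩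
  by_cases h : G.Adj u v
  exacts [(hx i u v h).1, (hxG i u v h).ge]

theorem exists_walk_decomposition (hLP : LPFeasible G sp sm r d p tp f y x) (i : Fin k) :
    ∃ (n : ℕ) (P : Fin n → G.Walk sp sm) (g : Fin n → ℝ), (∀ j, 0 ≤ g j) ∧ ∑ j, g j = f i ∧
      ∀ e ∈ G.edgeSet, ∑ j, (if e ∈ (P j).edges then g j else 0) ≤ y i e := by
  obtain ⟨hf, -, -, -, -, -, hcap⟩ := id hLP
  exact (hLP.isFlow i).exists_walk_decomposition_of_le (hf i).1 (hcap i)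

/-- By the processing constraint the capacities `(1 - y i e) * wᵢ` of the intervals inside the
window of `e` add up to at least `p e`; `m e ·` scales them down uniformly to total `p e`. -/
theorem exists_maintenance_amounts (hLP : LPFeasible G sp sm r d p tp f y x) (htp : Monotone tp)
    (hp : ∀ e ∈ G.edgeSet, 0 ≤ p e) :
    ∃ m : Sym2 V → Fin k → ℝ, ∀ e ∈ G.edgeSet, ∑ i, m e i = p e ∧
      ∀ i, 0 ≤ m e i ∧ m e i ≤ (1 - y i e) * (tp i.succ - tp i.castSucc) ∧
        (m e i = 0 ∨ r e ≤ tp i.castSucc ∧ tp i.succ ≤ d e) := by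
  obtain ⟨-, hy, -, -, -, hproc, -⟩ := hLP
  set c : Sym2 V → Fin k → ℝ := fun e i => if r e ≤ tp i.castSucc ∧ tp i.succ ≤ d e then
    (1 - y i e) * (tp i.succ - tp i.castSucc) else 0
  have hcy : ∀ e ∈ G.edgeSet, ∀ i, 0 ≤ (1 - y i e) * (tp i.succ - tp i.castSucc) := fun e he i =>
    mul_nonneg (sub_nonneg.2 (hy i e he).2) (sub_nonneg.2 (htp (Fin.castSucc_le_succ i)))
  have hc : ∀ e ∈ G.edgeSet, ∀ i, 0 ≤ c e i := fun e he i => by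
    simp only [c]; split_ifs; exacts [hcy e he i, le_rfl]
  refine ⟨fun e i => c e i * (p e / ∑ i', c e i'), fun e he =>
    ⟨sum_mul_div_sum (hp e he) (hc e he) (hproc e he), fun i => ⟨?_, ?_, ?_⟩⟩⟩
  · exact mul_nonneg (hc e he i) (div_nonneg (hp e he) (Finset.sum_nonneg fun i _ => hc e he i))
  · refine (mul_div_sum_le (hc e he) (hproc e he) i).trans ?_
    simp only [c]; split_ifs; exacts [le_rfl, hcy e he i]
  · by_cases hwin : r e ≤ tp i.castSucc ∧ tp i.succ ≤ d e
    · exact Or.inr hwin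
    · simp [c, hwin]

end LPFeasible

theorem lp_to_schedule {V : Type*} [Fintype V] [DecidableEq V]
    (G : SimpleGraph V) (sp sm : V) (r d p : Sym2 V → ℝ)
    (hr : ∀ e ∈ G.edgeSet, 0 ≤ r e)
    (hp : ∀ e ∈ G.edgeSet, 0 ≤ p e)
    (hrd : ∀ e ∈ G.edgeSet, r e + p e ≤ d e)
    {k : ℕ} (tp : Fin (k + 1) → ℝ) (htp : StrictMono tp)
    (hrange : Set.range tp = insert 0 {τ : ℝ | ∃ e ∈ G.edgeSet, r e = τ ∨ d e = τ})
    (f : Fin k → ℝ) (y : Fin k → Sym2 V → ℝ) (x : Fin k → V → V → ℝ)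
    (hLP : LPFeasible G sp sm r d p tp f y x) :
    ∃ S : Sym2 V → Set ℝ, PreemptFeasible G r d p S ∧
      ENNReal.ofReal (LPObjective tp f) ≤
        volume {t ∈ Set.Icc 0 (tp (Fin.last k)) |
          (G.deleteEdges {e | t ∈ S e}).Reachable sp sm} := by
  set I : Fin k → Set ℝ := fun i => Ico (tp i.castSucc) (tp i.succ)
  have hI : Pairwise (Disjoint on I) := htp.monotone.pairwise_disjoint_on_Ico_castSucc_succ
  have hw : ∀ i : Fin k, tp i.castSucc ≤ tp i.succ := fun i => htp.monotone (Fin.castSucc_le_succ i)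
  choose n P g hg hgf hload using hLP.exists_walk_decomposition
  obtain ⟨m, hm⟩ := hLP.exists_maintenance_amounts htp.monotone hp
  choose T U hT hUm hUI hUvol hU using fun i =>
    exists_interval_schedule (fun j e => e ∈ (P i j).edges) (hg i) ((hgf i).trans_le (hLP.1 i).2)
      (hw i) (fun e => m e i)
  refine ⟨fun e => ⋃ i, T i e ∩ Icc (r e) (d e), preemptFeasible_iUnion hI (fun i e => (hT i e).2.1)
    (fun i e => (hT i e).1) (fun e he i => ((hm e he).2 i).1) (fun e he => (hm e he).1)
    fun e he i => ?_, ?_⟩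
  · obtain ⟨hm₀, hmy, hwin⟩ := (hm e he).2 i
    exact measure_inter_eq_of_subset_or ((hT i e).2.2 hm₀ (by nlinarith [hload i e he, hw i]))
      (hwin.imp_right fun h =>
        (hT i e).2.1.trans (Ico_subset_Icc_self.trans (Icc_subset_Icc h.1 h.2)))
  have hIT : ∀ i, I i ⊆ Icc 0 (tp (Fin.last k)) := fun i =>
    Ico_subset_Icc_self.trans <| Icc_subset_Icc
      (nonneg_of_range_eq hrange hr (fun e he => by linarith [hr e he, hp e he, hrd e he]) _)
      (htp.monotone (Fin.le_last _))
  calc ENNReal.ofReal (LPObjective tp f) = volume (⋃ i, U i) := by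
        rw [measure_iUnion (fun i i' h => (hI h).mono (hUI i) (hUI i')) hUm, tsum_fintype,
          LPObjective, ENNReal.ofReal_sum_of_nonneg fun i _ =>
            mul_nonneg (sub_nonneg.2 (hw i)) (hLP.1 i).1]
        exact Finset.sum_congr rfl fun i _ => by rw [hUvol, hgf]
    _ ≤ _ := measure_mono fun t ht => by
        obtain ⟨i, hti⟩ := mem_iUnion.1 ht
        exact ⟨hIT i (hUI i hti), subset_reachable_deleteEdges hI (fun i e => (hT i e).2.1)
          (fun e => iUnion_mono fun i => inter_subset_left) hUI
          (fun i τ hτ => let ⟨j, hj⟩ := hU i τ hτ; ⟨P i j, hj⟩) ht⟩
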